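/- Let a > 0, ε > 0, b = −(2 + ε)a, α > 0, β < 0, and n ∈ ℕ. Then the maximum of |ρ_n(s, α, β)| over the closed right half-plane {s ∈ ℂ : Re s ≥ 0} is attained on the imaginary axis; that is, for every s with Re s ≥ 0, |ρ_n(s, α, β)| ≤ sup_{ω ∈ ℝ} |ρ_n(iω, α, β)|. -/

import Mathlib

/-! On the half-plane `Re s > 2a + b`, which contains the closed right half-plane when
`b = -(2 + ε)a`, the radicand of `λ₁` stays in the slit plane and `Re λ₁ > 1`. Hence `λ₁` is
holomorphic there, and `ρ_n` is a product of two factors `(t - λ₁)/(tλ₁ - 1)` with `|t| ≥ 1`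
and of `λ₁^(-2n)`, each of modulus at most `1`. A bounded holomorphic function on the right
half-plane is bounded by its supremum on the imaginary axis (Phragmén–Lindelöf). -/

/-- The root `λ₁(s) = ((s - b) + √((b - s)² - 4a²))/(2a)` of the characteristic equation,
with the principal branch of the complex square root. -/
noncomputable def lam1 (a b : ℝ) (s : ℂ) : ℂ :=
  ((s - (b : ℂ)) + (((b : ℂ) - s) ^ 2 - 4 * (a : ℂ) ^ 2) ^ ((1 : ℂ) / 2)) / (2 * (a : ℂ))

/-- The convergence factor of the OWR algorithm with overlap `n` and parameters `α, β`:
`ρ_n(s,α,β) = ((α+1-λ₁)/(λ₁(1+α)-1)) ((λ₁+β-1)/(1+(β-1)λ₁)) (1/λ₁²)ⁿ` with `λ₁ = λ₁(s)`. -/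
noncomputable def rhoOWR (a b : ℝ) (n : ℕ) (s : ℂ) (α β : ℝ) : ℂ :=
  (((α : ℂ) + 1 - lam1 a b s) / (lam1 a b s * (1 + (α : ℂ)) - 1)) *
    ((lam1 a b s + (β : ℂ) - 1) / (1 + ((β : ℂ) - 1) * lam1 a b s)) *
    (1 / (lam1 a b s) ^ 2) ^ n

open Complex Filter Asymptotics

namespace Complex

lemma re_cpow_one_div_two_nonneg (w : ℂ) : 0 ≤ (w ^ ((1 : ℂ) / 2)).re := by
  rw [one_div, cpow_inv_two_re]
  exact Real.sqrt_nonneg _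

lemma sq_sub_sq_mem_slitPlane {w : ℂ} {r : ℝ} (h : |r| < w.re) :
    w ^ 2 - (r : ℂ) ^ 2 ∈ slitPlane := by
  have hw : 0 < w.re := (abs_nonneg r).trans_lt h
  rw [mem_slitPlane_iff]
  rcases eq_or_ne w.im 0 with him | him
  · left
    simp only [sq, sub_re, mul_re, ofReal_re, ofReal_im, him]
    nlinarith [sq_abs r, abs_nonneg r]
  · right
    simp only [sq, sub_im, mul_im, ofReal_re, ofReal_im]
    have : w.re * w.im ≠ 0 := mul_ne_zero hw.ne' him
    intro h0
    apply this
    linarith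

lemma norm_sub_le_norm_mul_sub_one {t : ℝ} (ht : 1 ≤ |t|) {z : ℂ} (hz : 1 ≤ ‖z‖) :
    ‖(t : ℂ) - z‖ ≤ ‖t * z - 1‖ := by
  rw [← sq_le_sq₀ (norm_nonneg _) (norm_nonneg _), Complex.sq_norm, Complex.sq_norm]
  have ht2 : 1 ≤ t ^ 2 := by nlinarith [sq_abs t]
  have hz2 : 1 ≤ normSq z := by rw [← Complex.sq_norm]; nlinarith
  have hdiff : normSq (t * z - 1) - normSq (t - z) = (t ^ 2 - 1) * (normSq z - 1) := by
    simp only [normSq_apply, sub_re, sub_im, mul_re, mul_im, ofReal_re, ofReal_im, one_re,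
      one_im]
    ring
  nlinarith [mul_nonneg (sub_nonneg.2 ht2) (sub_nonneg.2 hz2)]

lemma norm_sub_div_mul_sub_one_le_one {t : ℝ} (ht : 1 ≤ |t|) {z : ℂ} (hz : 1 ≤ ‖z‖) :
    ‖((t : ℂ) - z) / (t * z - 1)‖ ≤ 1 := by
  rw [norm_div]
  exact div_le_one_of_le₀ (norm_sub_le_norm_mul_sub_one ht hz) (norm_nonneg _)

lemma mul_sub_one_ne_zero {t : ℝ} (ht : 1 ≤ |t|) {z : ℂ} (hz : 1 < ‖z‖) :
    (t : ℂ) * z - 1 ≠ 0 := by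
  rw [sub_ne_zero]
  intro h
  have := congrArg norm h
  rw [norm_mul, norm_real, Real.norm_eq_abs, norm_one] at this
  nlinarith

end Complex

namespace PhragmenLindelof

theorem right_half_plane_le_iSup_imaginary_axis {E : Type*} [NormedAddCommGroup E]
    [NormedSpace ℂ E] {f : ℂ → E} {B : ℝ} (hd : DiffContOnCl ℂ f {z | 0 < z.re})
    (hB : ∀ z : ℂ, 0 ≤ z.re → ‖f z‖ ≤ B) {z : ℂ} (hz : 0 ≤ z.re) :
    ‖f z‖ ≤ ⨆ ω : ℝ, ‖f (I * ω)‖ := by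
  have hbdd : BddAbove (Set.range fun ω : ℝ => ‖f (I * ω)‖) :=
    ⟨B, Set.forall_mem_range.2 fun ω => hB _ (by simp)⟩
  refine right_half_plane_of_bounded_on_real hd ?_ ?_ (fun x => ?_) hz
  · refine ⟨0, two_pos, 0, IsBigO.of_bound B (eventually_inf_principal.2 <| .of_forall ?_)⟩
    intro z hz
    simpa using hB z hz.le
  · exact isBoundedUnder_of_eventually_le
      ((eventually_ge_atTop 0).mono fun x hx => hB x (by simpa using hx))
  · rw [mul_comm]
    exact le_ciSup hbdd x

end PhragmenLindelof

section lam1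

variable {a b : ℝ} {s : ℂ}

lemma lam1_radicand_mem_slitPlane (ha : 0 < a) (hs : 2 * a + b < s.re) :
    ((b : ℂ) - s) ^ 2 - 4 * (a : ℂ) ^ 2 ∈ slitPlane := by
  have hsq : ((b : ℂ) - s) ^ 2 - 4 * (a : ℂ) ^ 2 = (s - b) ^ 2 - ((2 * a : ℝ) : ℂ) ^ 2 := by
    push_cast
    ring
  rw [hsq]
  refine sq_sub_sq_mem_slitPlane ?_
  rw [abs_of_pos (by positivity), sub_re, ofReal_re]
  linarith

lemma one_lt_re_lam1 (ha : 0 < a) (hs : 2 * a + b < s.re) : 1 < (lam1 a b s).re := by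
  have h2a : (2 : ℂ) * a = ((2 * a : ℝ) : ℂ) := by push_cast; ring
  rw [lam1, h2a, div_ofReal_re, one_lt_div (by positivity), add_re, sub_re, ofReal_re]
  linarith [re_cpow_one_div_two_nonneg (((b : ℂ) - s) ^ 2 - 4 * (a : ℂ) ^ 2)]

lemma one_lt_norm_lam1 (ha : 0 < a) (hs : 2 * a + b < s.re) : 1 < ‖lam1 a b s‖ :=
  (one_lt_re_lam1 ha hs).trans_le (re_le_norm _)

lemma differentiableAt_lam1 (ha : 0 < a) (hs : 2 * a + b < s.re) :
    DifferentiableAt ℂ (lam1 a b) s := by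
  have hsqrt : DifferentiableAt ℂ
      (fun z : ℂ => (((b : ℂ) - z) ^ 2 - 4 * (a : ℂ) ^ 2) ^ ((1 : ℂ) / 2)) s :=
    (by fun_prop : DifferentiableAt ℂ (fun z : ℂ => ((b : ℂ) - z) ^ 2 - 4 * (a : ℂ) ^ 2) s).cpow
      (differentiableAt_const _) (lam1_radicand_mem_slitPlane ha hs)
  unfold lam1
  fun_prop

end lam1

section rhoOWR

variable {a b α β : ℝ} {n : ℕ} {s : ℂ}

lemma rhoOWR_eq :
    rhoOWR a b n s α β =
      (((1 + α : ℝ) : ℂ) - lam1 a b s) / ((1 + α : ℝ) * lam1 a b s - 1) *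
        ((((1 - β : ℝ) : ℂ) - lam1 a b s) / ((1 - β : ℝ) * lam1 a b s - 1)) *
        (1 / lam1 a b s ^ 2) ^ n := by
  rw [rhoOWR, ← neg_div_neg_eq (lam1 a b s + β - 1)]
  push_cast
  ring_nf

lemma norm_rhoOWR_le_one (hα : 0 ≤ α) (hβ : β ≤ 0) (hL : 1 ≤ ‖lam1 a b s‖) :
    ‖rhoOWR a b n s α β‖ ≤ 1 := by
  have hpow : ‖(1 / lam1 a b s ^ 2) ^ n‖ ≤ 1 := by
    rw [norm_pow, one_div, norm_inv, norm_pow]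
    exact pow_le_one₀ (by positivity) (inv_le_one_of_one_le₀ (one_le_pow₀ hL))
  rw [rhoOWR_eq, norm_mul, norm_mul]
  refine mul_le_one₀ (mul_le_one₀ ?_ (norm_nonneg _) ?_) (norm_nonneg _) hpow
  · exact norm_sub_div_mul_sub_one_le_one (by rw [abs_of_pos (by linarith)]; linarith) hL
  · exact norm_sub_div_mul_sub_one_le_one (by rw [abs_of_pos (by linarith)]; linarith) hL

lemma differentiableAt_rhoOWR (ha : 0 < a) (hα : 0 ≤ α) (hβ : β ≤ 0) (hs : 2 * a + b < s.re) :
    DifferentiableAt ℂ (fun z => rhoOWR a b n z α β) s := by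
  have hL := differentiableAt_lam1 ha hs
  have hnorm := one_lt_norm_lam1 ha hs
  have hα' : ((1 + α : ℝ) : ℂ) * lam1 a b s - 1 ≠ 0 :=
    mul_sub_one_ne_zero (by rw [abs_of_pos (by linarith)]; linarith) hnorm
  have hβ' : ((1 - β : ℝ) : ℂ) * lam1 a b s - 1 ≠ 0 :=
    mul_sub_one_ne_zero (by rw [abs_of_pos (by linarith)]; linarith) hnorm
  have hL0 : lam1 a b s ^ 2 ≠ 0 := pow_ne_zero _ (norm_pos_iff.1 (one_pos.trans hnorm))
  simp_rw [rhoOWR_eq]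
  exact ((((differentiableAt_const _).sub hL).div ((hL.const_mul _).sub_const _) hα').mul
    (((differentiableAt_const _).sub hL).div ((hL.const_mul _).sub_const _) hβ')).mul
    (((differentiableAt_const _).div (hL.pow 2) hL0).pow n)

end rhoOWR

/-- For `a > 0`, `ε > 0`, `b = -(2 + ε)a`, `α > 0`, `β < 0` and any overlap `n`, the maximum
of `|ρ_n(·, α, β)|` over the closed right half-plane is attained on the imaginary axis:
for every `s` with `Re s ≥ 0`, `|ρ_n(s, α, β)| ≤ sup_{ω ∈ ℝ} |ρ_n(iω, α, β)|`. -/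
theorem owr_maximum_on_imaginary_axis (a ε α β : ℝ) (ha : 0 < a) (hε : 0 < ε)
    (hα : 0 < α) (hβ : β < 0) (n : ℕ) (s : ℂ) (hs : 0 ≤ s.re) :
    ‖rhoOWR a (-(2 + ε) * a) n s α β‖
      ≤ ⨆ ω : ℝ, ‖rhoOWR a (-(2 + ε) * a) n (Complex.I * (ω : ℂ)) α β‖ := by
  have hhalf : ∀ z : ℂ, 0 ≤ z.re → 2 * a + -(2 + ε) * a < z.re := fun z hz => by
    nlinarith
  refine PhragmenLindelof.right_half_plane_le_iSup_imaginary_axis ?_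
    (fun z hz => norm_rhoOWR_le_one hα.le hβ.le (one_lt_norm_lam1 ha (hhalf z hz)).le) hs
  refine DifferentiableOn.diffContOnCl ?_
  rw [closure_setOfPred_lt_re]
  exact fun z hz => (differentiableAt_rhoOWR ha hα.le hβ.le (hhalf z hz)).differentiableWithinAt
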